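/- arXiv:1210.0372 — 2 statements merged into one kernel-verified Lean document; each statement's English description precedes it below -/
import Mathlib

section
/- The identity h(z,x,y) = (1 + xz/q)·h(z,x,qy) − (z/q)·(x + qy)·h(z,x,q²y) holds as formal power series in z over ℚ(q,x,y), where h(z,x,y) = Σ_{k≥0} (−1)^k q^{k(k−1)/2} ∏_{j=0}^{k−1}(x + q^j y)/∏_{j=1}^{k}(1 − q^j) · z^k. -/
noncomputable section
open PowerSeries Finset

/-- The field `ℚ(q, x, y)` of rational functions in three indeterminates. -/
abbrev K : Type := FractionRing (MvPolynomial (Fin 3) ℚ)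

/-- The indeterminate `q`. -/
def q : K := algebraMap (MvPolynomial (Fin 3) ℚ) K (MvPolynomial.X 0)
/-- The indeterminate `x`. -/
def x : K := algebraMap (MvPolynomial (Fin 3) ℚ) K (MvPolynomial.X 1)
/-- The indeterminate `y`. -/
def y : K := algebraMap (MvPolynomial (Fin 3) ℚ) K (MvPolynomial.X 2)

/-- The coefficient `h_k(a,b) = (−1)^k q^{k(k−1)/2} ∏_{j=0}^{k−1}(a+q^j b) / ∏_{j=1}^{k}(1−q^j)`. -/
def hk (a b : K) (k : ℕ) : K :=
  (-1) ^ k * q ^ (k.choose 2) * (∏ j ∈ range k, (a + q ^ j * b)) /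
    (∏ j ∈ range k, (1 - q ^ (j + 1)))

/-- The series `h(z,a,b) = Σ_k h_k(a,b) z^k`. -/
def hser (a b : K) : PowerSeries K := PowerSeries.mk (hk a b)

/-!
Comparing coefficients of `z^(n+1)`, the identity becomes a relation between `h_{n+1}(a,b)`,
`h_{n+1}(a,qb)`, `h_n(a,qb)` and `h_n(a,q²b)`. Removing the last factor of the product gives
`h_{n+1}(a,b) = -qⁿ(a + qⁿb)/(1 - qⁿ⁺¹) · h_n(a,b)`, removing the first one gives
`h_{n+1}(a,b) = -qⁿ(a + b)/(1 - qⁿ⁺¹) · h_n(a,qb)`. Applying both at `qb` yields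
`(a + qb) h_n(a,q²b) = (a + qⁿ⁺¹b) h_n(a,qb)`, after which everything is a multiple of
`h_n(a,qb)` and the relation is an identity of rational functions in `q, qⁿ, a, b`.
-/

lemma q_ne_zero : q ≠ 0 :=
  (map_ne_zero_iff _ (IsFractionRing.injective _ _)).2 (MvPolynomial.X_ne_zero 0)

lemma one_sub_q_pow_succ_ne_zero (n : ℕ) : 1 - q ^ (n + 1) ≠ 0 := by
  rw [sub_ne_zero, q, ← map_pow, ← map_one (algebraMap (MvPolynomial (Fin 3) ℚ) K)]
  refine (IsFractionRing.injective _ _).ne fun h => ?_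
  simpa using congrArg MvPolynomial.constantCoeff h

lemma prod_one_sub_q_pow_succ_ne_zero (n : ℕ) : ∏ j ∈ range n, (1 - q ^ (j + 1)) ≠ 0 :=
  prod_ne_zero_iff.2 fun j _ => one_sub_q_pow_succ_ne_zero j

lemma succ_choose_two (n : ℕ) : (n + 1).choose 2 = n.choose 2 + n := by
  rw [Nat.choose_succ_succ', Nat.choose_one_right, add_comm]

lemma hk_succ (a b : K) (n : ℕ) :
    hk a b (n + 1) = -q ^ n * (a + q ^ n * b) / (1 - q ^ (n + 1)) * hk a b n := by
  have := one_sub_q_pow_succ_ne_zero n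
  have := prod_one_sub_q_pow_succ_ne_zero n
  rw [hk, hk, prod_range_succ, prod_range_succ, succ_choose_two]
  generalize ∏ j ∈ range n, (a + q ^ j * b) = P
  field_simp
  ring

lemma hk_succ_eq_shift (a b : K) (n : ℕ) :
    hk a b (n + 1) = -q ^ n * (a + b) / (1 - q ^ (n + 1)) * hk a (q * b) n := by
  have := one_sub_q_pow_succ_ne_zero n
  have := prod_one_sub_q_pow_succ_ne_zero n
  have hP : ∏ j ∈ range n, (a + q ^ (j + 1) * b) = ∏ j ∈ range n, (a + q ^ j * (q * b)) :=
    prod_congr rfl fun j _ => by ring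
  rw [hk, hk, prod_range_succ', prod_range_succ, hP, succ_choose_two]
  generalize ∏ j ∈ range n, (a + q ^ j * (q * b)) = P
  field_simp
  ring

lemma hk_succ_three_term (a b : K) (n : ℕ) :
    hk a b (n + 1) =
      hk a (q * b) (n + 1) + a / q * hk a (q * b) n - (a + q * b) / q * hk a (q ^ 2 * b) n := by
  have hq := q_ne_zero
  have hu := one_sub_q_pow_succ_ne_zero n
  have hratio := hk_succ a (q * b) n
  have hshift := hk_succ_eq_shift a (q * b) n
  rw [← mul_assoc, ← pow_two] at hshift
  have hcancel :
      (a + q * b) / q * hk a (q ^ 2 * b) n = (a + q ^ (n + 1) * b) / q * hk a (q * b) n := by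
    have hc : -q ^ n / (1 - q ^ (n + 1)) ≠ 0 := div_ne_zero (neg_ne_zero.2 (pow_ne_zero n hq)) hu
    refine mul_left_cancel₀ hc ?_
    linear_combination (1 / q) * (hshift.symm.trans hratio)
  rw [hk_succ_eq_shift a b n, hratio, hcancel]
  field_simp
  ring

theorem hser_three_term (a b : K) :
    hser a b =
      (1 + C (a / q) * X) * hser a (q * b) - C ((a + q * b) / q) * X * hser a (q ^ 2 * b) := by
  ext (_ | n)
  · simp [hser, hk]
  · rw [add_mul, one_mul, mul_assoc, mul_assoc, mul_left_comm (C _), mul_left_comm (C _)]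
    simp only [map_sub, map_add, coeff_succ_X_mul, coeff_C_mul, hser, coeff_mk]
    exact hk_succ_three_term a b n

/-- Formula (2.14): `h(z,x,y) = (1 + xz/q)·h(z,x,qy) − (z/q)(x+qy)·h(z,x,q²y)`
as formal power series in `z` over `ℚ(q,x,y)`. -/
theorem h_three_term :
    hser x y =
      (1 + C (x / q) * X) * hser x (q * y)
        - C ((x + q * y) / q) * X * hser x (q ^ 2 * y) :=
  hser_three_term x y

end
end

section
/- Let f(z,x,y) = (x + y·F(z,x,y))/(x+y) where F is the unique series with constant term 1 satisfying F(z)=1+xzF(z)+yzF(z)F(qz). Then f(z,x,y) = 1 + yz·F(z,x,y)·f(qz,x,y). -/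
noncomputable section
open PowerSeries Finset

/-!
Clearing the denominator, the claim reads `x + yF = (x + y) + yzF(z)·(x + yF(qz))`. Its right side
is `x + y·(1 + xzF + yzF(z)F(qz))`, which is `x + yF` by the functional equation of `F`.
-/

theorem PowerSeries.rescale_C {R : Type*} [CommSemiring R] (a b : R) :
    rescale a (C b) = C b := by
  ext n
  rcases n with _ | n <;> simp [coeff_rescale, coeff_C]

theorem PowerSeries.eq_one_add_C_mul_X_mul_rescale {R : Type*} [Field R] {a u v : R}
    (huv : u + v ≠ 0) {F f : R⟦X⟧}
    (hF : F = 1 + C u * X * F + C v * X * (F * rescale a F))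
    (hf : f = C (u + v)⁻¹ * (C u + C v * F)) :
    f = 1 + C v * X * (F * rescale a f) := by
  have hC : C (u + v) * C (u + v)⁻¹ = 1 := by rw [← map_mul, mul_inv_cancel₀ huv, map_one]
  have hf' : C (u + v) * f = C u + C v * F := by rw [hf, ← mul_assoc, hC, one_mul]
  have hrf : rescale a f = C (u + v)⁻¹ * (C u + C v * rescale a F) := by
    rw [hf, map_mul, map_add, map_mul, rescale_C, rescale_C, rescale_C]
  have hrf' : C (u + v) * rescale a f = C u + C v * rescale a F := by
    rw [hrf, ← mul_assoc, hC, one_mul]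
  refine mul_left_cancel₀ ((map_ne_zero_iff _ C_injective).mpr huv) ?_
  calc C (u + v) * f = C u + C v * F := hf'
    _ = C (u + v) + C v * X * (F * (C u + C v * rescale a F)) := by
        rw [map_add]; nth_rewrite 1 [hF]; ring
    _ = C (u + v) * (1 + C v * X * (F * rescale a f)) := by rw [← hrf']; ring

theorem x_add_y_ne_zero : x + y ≠ 0 := by
  rw [x, y, ← map_add, Ne, map_eq_zero_iff _ (IsFractionRing.injective _ K)]
  intro h
  simpa using congrArg (MvPolynomial.eval fun _ => (1 : ℚ)) h

theorem f_in_terms_of_F_general (F f : PowerSeries K)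
    (hF : F = 1 + C x * X * F + C y * X * (F * rescale q F))
    (hf : f = C (x + y)⁻¹ * (C x + C y * F)) :
    f = 1 + C y * X * (F * rescale q f) :=
  eq_one_add_C_mul_X_mul_rescale x_add_y_ne_zero hF hf

/-- With `F` the series with constant term `1` satisfying `F = 1 + xzF(z) + yzF(z)F(qz)`
and `f = (x + yF)/(x+y)`, one has `f(z) = 1 + yz·F(z)·f(qz)`. -/
theorem f_in_terms_of_F (F f : PowerSeries K)
    (h1 : constantCoeff F = 1)
    (hF : F = 1 + C x * X * F + C y * X * (F * rescale q F))
    (hf : f = C (x + y)⁻¹ * (C x + C y * F)) :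
    f = 1 + C y * X * (F * rescale q f) :=
  f_in_terms_of_F_general F f hF hf

end
end
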